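/- A regular convex N-gon can be divided into convex (m+2)-gons by pairwise non-crossing diagonals if and only if N ≡ 2 (mod m). -/

import Mathlib

open CategoryTheory Limits ZeroObject Pretriangulated

namespace MCT

/-- Divisibility of a convex `N`-gon into convex `(m+2)`-gons by pairwise
non-crossing diagonals, defined recursively: either the polygon is itself an
`(m+2)`-gon, or some diagonal splits it into two polygons, each of which can be
so divided. -/
inductive GonDiv (m : ℕ) : ℕ → Prop
  | base : GonDiv m (m + 2)
  | split {a b : ℕ} : 3 ≤ a → 3 ≤ b → GonDiv m a → GonDiv m b → GonDiv m (a + b - 2)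

/-- A diagonal of a convex `N`-gon with vertices labelled `0, …, N-1`
anticlockwise: a chord joining two non-adjacent boundary vertices, recorded
with its smaller endpoint first. -/
def Dgl (N : ℕ) : Type :=
  {p : Fin N × Fin N // (p.1 : ℕ) + 1 < (p.2 : ℕ) ∧ ¬((p.1 : ℕ) = 0 ∧ (p.2 : ℕ) = N - 1)}

instance (N : ℕ) : DecidableEq (Dgl N) := by
  unfold Dgl; infer_instance

/-- A diagonal is `m`-allowable if it cuts the `N`-gon into two polygons each of
which can be subdivided into `(m+2)`-gons by non-crossing chords. -/
def DglAllow (m : ℕ) {N : ℕ} (d : Dgl N) : Prop :=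
  GonDiv m (((d.1.2 : ℕ) - (d.1.1 : ℕ)) + 1) ∧
    GonDiv m ((N - ((d.1.2 : ℕ) - (d.1.1 : ℕ))) + 1)

/-- Two diagonals cross in the interior of the polygon. -/
def Crosses {N : ℕ} (d e : Dgl N) : Prop :=
  ((d.1.1 : ℕ) < (e.1.1 : ℕ) ∧ (e.1.1 : ℕ) < (d.1.2 : ℕ) ∧ (d.1.2 : ℕ) < (e.1.2 : ℕ)) ∨
  ((e.1.1 : ℕ) < (d.1.1 : ℕ) ∧ (d.1.1 : ℕ) < (e.1.2 : ℕ) ∧ (e.1.2 : ℕ) < (d.1.2 : ℕ))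

/-- A maximal division of the convex `N`-gon by pairwise non-crossing
`m`-allowable diagonals. -/
structure Division (m N : ℕ) where
  diags : Finset (Dgl N)
  allw : ∀ d ∈ diags, DglAllow m d
  nc : ∀ d ∈ diags, ∀ e ∈ diags, ¬ Crosses d e
  maximal : ∀ d : Dgl N, DglAllow m d → (∀ e ∈ diags, ¬ Crosses d e) → d ∈ diags

variable {m N : ℕ}

/-- `v` is an endpoint of the diagonal `d`. -/
def endpt (d : Dgl N) (v : Fin N) : Prop := d.1.1 = v ∨ d.1.2 = v

/-- The endpoint of `d` other than `v`. -/
noncomputable def other (d : Dgl N) (v : Fin N) : Fin N :=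
  if d.1.1 = v then d.1.2 else d.1.1

/-- Anticlockwise angular distance from `v` to `w` around the polygon. -/
def ang {N : ℕ} (v w : Fin N) : ℕ := ((w : ℕ) + N - (v : ℕ)) % N

/-- In the division `T` there is an arrow from `d` to `e` located at the common
endpoint `v`: `d` and `e` share the polygon vertex `v`, are edges of the same
`(m+2)`-gon of the division (i.e. are angularly adjacent at `v` among diagonals
of `T`), and `e` follows `d` in the clockwise direction around `v`. -/
def ArrowAt (T : Division m N) (d e : Dgl N) (v : Fin N) : Prop :=
  d ∈ T.diags ∧ e ∈ T.diags ∧ d ≠ e ∧ endpt d v ∧ endpt e v ∧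
    ang v (other e v) < ang v (other d v) ∧
    ∀ f ∈ T.diags, f ≠ d → f ≠ e → endpt f v →
      ¬(ang v (other e v) < ang v (other f v) ∧ ang v (other f v) < ang v (other d v))

/-- The arrows of the quiver `Q_T` of the division `T`. -/
def Arrow (T : Division m N) (d e : Dgl N) : Prop := ∃ v, ArrowAt T d e v

/-- `x` and `y` lie (weakly) on the same side of the diagonal `e`. -/
def SameSide {N : ℕ} (e : Dgl N) (x y : Fin N) : Prop :=
  (((e.1.1 : ℕ) < (x : ℕ) ∧ (x : ℕ) < (e.1.2 : ℕ)) ↔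
    ((e.1.1 : ℕ) < (y : ℕ) ∧ (y : ℕ) < (e.1.2 : ℕ)))

/-- The zero relations of `I_T`: the length-two path `d → e → f` is a relation
exactly when the three diagonals `d`, `e`, `f` are edges of the same
`(m+2)`-gon of the division. -/
def RelTriple (T : Division m N) (d e f : Dgl N) : Prop :=
  ∃ v w, ArrowAt T d e v ∧ ArrowAt T e f w ∧ SameSide e (other d v) (other f w)

/-- The vertices of the quiver `Q_T`. -/
def Vtx (T : Division m N) : Type := {d : Dgl N // d ∈ T.diags}

instance (T : Division m N) : Fintype (Vtx T) := by
  unfold Vtx; infer_instance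

instance (T : Division m N) : DecidableEq (Vtx T) := by
  unfold Vtx; infer_instance

/-- The arrow relation of `Q_T` on its vertex set. -/
def ArrowV (T : Division m N) : Vtx T → Vtx T → Prop := fun a b => Arrow T a.1 b.1

/-- The relations of `I_T` on the vertex set of `Q_T`. -/
def RelV (T : Division m N) : Vtx T → Vtx T → Vtx T → Prop :=
  fun a b c => RelTriple T a.1 b.1 c.1

/-- An oriented cycle in the quiver of the division `T`, recorded as the list
of its (pairwise distinct) vertices. -/
def IsCycle (T : Division m N) (l : List (Dgl N)) : Prop :=
  l ≠ [] ∧ l.Nodup ∧ List.Chain' (Arrow T) (l ++ l.take 1)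

/-- The cycle `l` has full relations: every composition of two (cyclically)
consecutive arrows of the cycle is a zero relation. -/
def CycFullRel (T : Division m N) (l : List (Dgl N)) : Prop :=
  ∀ (k : ℕ) (a b c : Dgl N) (r : List (Dgl N)),
    l.rotate k = a :: b :: c :: r → RelTriple T a b c

/-- The number of oriented cycles in the quiver of the division `T`. -/
noncomputable def CycleCount (T : Division m N) : ℕ :=
  Nat.card {S : Finset (Dgl N) // ∃ l, IsCycle T l ∧ l.toFinset = S}

/-- The number of oriented cycles of `T` supported in the set `S`. -/
noncomputable def CycleCountIn (T : Division m N) (S : Finset (Dgl N)) : ℕ :=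
  Nat.card {S' : Finset (Dgl N) // ∃ l, IsCycle T l ∧ l.toFinset = S' ∧ ∀ d ∈ l, d ∈ S}

/-- The quiver of the division `T` is connected. -/
def Connected (T : Division m N) : Prop :=
  ∀ d ∈ T.diags, ∀ e ∈ T.diags,
    Relation.ReflTransGen (fun a b => Arrow T a b ∨ Arrow T b a) d e

/-- `S` is (the vertex set of) a connected component of the quiver of `T`. -/
def IsComponent (T : Division m N) (S : Finset (Dgl N)) : Prop :=
  S.Nonempty ∧ S ⊆ T.diags ∧
    (∀ d ∈ S, ∀ e, (Arrow T d e ∨ Arrow T e d) → e ∈ S) ∧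
    ∀ d ∈ S, ∀ e ∈ S, Relation.ReflTransGen (fun a b => Arrow T a b ∨ Arrow T b a) d e

variable {V : Type*}

/-- The property that a list of quiver vertices (a walk) contains no
consecutive triple forming one of the zero relations `Z`. -/
inductive OK3 (Z : V → V → V → Prop) : List V → Prop
  | nil : OK3 Z []
  | single (a : V) : OK3 Z [a]
  | pair (a b : V) : OK3 Z [a, b]
  | cons {a b c : V} {l : List V} : ¬ Z a b c → OK3 Z (b :: c :: l) →
      OK3 Z (a :: b :: c :: l)

/-- The nonzero paths of the quiver with vertex set `V`, arrow relation `R` and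
zero relations `Z`: nonempty walks along arrows avoiding the relations.
(The walk `[v]` is the lazy path at the vertex `v`.) -/
def OKWord (R : V → V → Prop) (Z : V → V → V → Prop) : Type _ :=
  {l : List V // l ≠ [] ∧ l.Chain' R ∧ OK3 Z l}

/-- The product, in the algebra `A`, of the idempotents/arrows along a walk. -/
noncomputable def wordProd {A : Type*} [Ring A] (e : V → A) (x : V → V → A) :
    List V → A
  | [] => 1
  | [d] => e d
  | d :: d' :: l => x d d' * wordProd e x (d' :: l)

/-- A presentation of the algebra `A` as the quotient `kQ/I` of the path
algebra of the quiver with vertex set `V` and arrows `R` by the ideal `I`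
generated by the length-two zero relations `Z`: complete orthogonal
idempotents `e v`, arrow elements `x v w`, such that relations are sent to
zero, and the nonzero paths form a `k`-basis. -/
structure MonPres (k : Type) [Field k] (A : Type*) [Ring A] [Algebra k A]
    (V : Type) [Fintype V] (R : V → V → Prop) (Z : V → V → V → Prop) where
  e : V → A
  x : V → V → A
  e_orth : ∀ v w, v ≠ w → e v * e w = 0
  e_idem : ∀ v, e v * e v = e v
  e_sum : ∑ v, e v = 1
  x_corner : ∀ v w, e v * x v w * e w = x v w
  x_arrow : ∀ v w, ¬ R v w → x v w = 0
  x_ne : ∀ v w, R v w → x v w ≠ 0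
  x_rel : ∀ u v w, Z u v w → x u v * x v w = 0
  basis : Module.Basis (OKWord R Z) k A
  basis_eq : ∀ w : OKWord R Z, basis w = wordProd e x w.1

/-- The quiver with relations `(V, R, Z)` is gentle. -/
structure GentleData (V : Type) (R : V → V → Prop) (Z : V → V → V → Prop) : Prop where
  rel_comp : ∀ a b c, Z a b c → R a b ∧ R b c
  out_two : ∀ a b c d, R a b → R a c → R a d → b = c ∨ b = d ∨ c = d
  in_two : ∀ a b c d, R b a → R c a → R d a → b = c ∨ b = d ∨ c = d
  out_rel : ∀ a b c c', Z a b c → Z a b c' → c = c'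
  out_nonrel : ∀ a b c c', R a b → R b c → R b c' → ¬ Z a b c → ¬ Z a b c' → c = c'
  in_rel : ∀ a a' b c, Z a b c → Z a' b c → a = a'
  in_nonrel : ∀ a a' b c, R a b → R a' b → R b c → ¬ Z a b c → ¬ Z a' b c → a = a'

/-- An algebra is gentle if it admits a presentation by a gentle quiver with
relations. -/
def IsGentleAlgebra (k : Type) [Field k] (A : Type*) [Ring A] [Algebra k A] : Prop :=
  ∃ (V : Type) (_ : Fintype V) (R : V → V → Prop) (Z : V → V → V → Prop),
    GentleData V R Z ∧ Nonempty (MonPres k A V R Z)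

/-- The `(i,j)` entry of the Cartan matrix of a presented algebra: the
`k`-dimension of `e_i A e_j`, i.e. of `Hom_A(P_i, P_j)`. -/
noncomputable def cartan {k : Type} [Field k] {A : Type*} [Ring A] [Algebra k A]
    {V : Type} [Fintype V] {R : V → V → Prop} {Z : V → V → V → Prop}
    (P : MonPres k A V R Z) (i j : V) : ℕ :=
  Module.finrank k (LinearMap.range
    ((LinearMap.mulLeft k (P.e i)).comp (LinearMap.mulRight k (P.e j))))

section Derived

/-- An object of the derived category is bounded with finitely generated
homology, i.e. lies in (the natural copy of) `D^b(mod B)`. -/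
noncomputable def BddFG (B : Type) [Ring B]
    [HasDerivedCategory (ModuleCat.{0} B)] (X : DerivedCategory (ModuleCat.{0} B)) : Prop :=
  (∃ a b : ℤ, ∀ n : ℤ, (n < a ∨ b < n) →
      IsZero ((DerivedCategory.homologyFunctor (ModuleCat.{0} B) n).obj X)) ∧
    ∀ n : ℤ, Module.Finite B ((DerivedCategory.homologyFunctor (ModuleCat.{0} B) n).obj X)

/-- Two rings are derived equivalent: their bounded derived categories of
modules with finitely generated homology are equivalent. -/
noncomputable def DerivedEquivalent (B C : Type) [Ring B] [Ring C] : Prop :=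
  letI := HasDerivedCategory.standard (ModuleCat.{0} B)
  letI := HasDerivedCategory.standard (ModuleCat.{0} C)
  Nonempty ((ObjectProperty.FullSubcategory fun X : DerivedCategory (ModuleCat.{0} B) => BddFG B X) ≌
    (ObjectProperty.FullSubcategory fun Y : DerivedCategory (ModuleCat.{0} C) => BddFG C Y))

end Derived

section Proj

variable {A : Type} [Ring A]

/-- Right multiplication by `u`, as an endomorphism of the left regular module. -/
noncomputable def rmulHom (A : Type) [Ring A] (u : A) : A →ₗ[A] A :=
  LinearMap.toSpanSingleton A A u

/-- The left ideal `A·u` as a submodule of the regular module. -/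
noncomputable def PmodSub (A : Type) [Ring A] (u : A) : Submodule A A :=
  LinearMap.range (rmulHom A u)

/-- The (projective) module `A·e` attached to an idempotent `e`. -/
noncomputable def Pmod (A : Type) [Ring A] (u : A) : ModuleCat A :=
  ModuleCat.of A (PmodSub A u)

/-- The map `A·u → A·v` given by right multiplication by `w`
(where `w * v = w`, e.g. `w ∈ uAv`); for an arrow `α : i → j` of the quiver,
taking `w = x_α` gives the map `P_i → P_j` induced by `α`. -/
noncomputable def pMap (A : Type) [Ring A] (u v w : A) (h : w * v = w) :
    Pmod A u ⟶ Pmod A v :=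
  ModuleCat.ofHom (LinearMap.codRestrict (PmodSub A v)
    ((rmulHom A w).comp (PmodSub A u).subtype)
    (fun y => ⟨y.1 * w, by
      simp only [rmulHom, LinearMap.toSpanSingleton_apply, smul_eq_mul, LinearMap.coe_comp,
        Function.comp_apply, Submodule.coe_subtype, mul_assoc, h]⟩))

end Proj

section TwoTerm

variable {C : Type*} [Category C] [HasZeroObject C] [HasZeroMorphisms C]


/-- The two-term cochain complex `⋯ → 0 → M → N → 0 → ⋯` with `M` in degree `0`
and `N` in degree `1`. -/
noncomputable def twoTerm (M N : C) (f : M ⟶ N) : CochainComplex C ℤ where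
  X n := if n = 0 then M else if n = 1 then N else 0
  d i j :=
    if h : i = 0 ∧ j = 1 then
      eqToHom (by rw [h.1]; norm_num) ≫ f ≫
        eqToHom (by rw [h.2]; norm_num)
    else 0
  shape i j hij := by
    rw [dif_neg]
    rintro ⟨rfl, rfl⟩
    simp [ComplexShape.up] at hij
  d_comp_d' i j k _ _ := by
    by_cases h : j = 0 ∧ k = 1
    · rw [dif_neg (fun hc : i = 0 ∧ j = 1 => by omega)]
      exact zero_comp
    · rw [dif_neg h]
      exact comp_zero

end TwoTerm

section Tilting

variable {A : Type} [Ring A]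


/-- `X` is a tilting complex over `A`: a bounded complex of finitely generated
projectives which is self-orthogonal in all nonzero degrees in the homotopy
category `K^b(P(A))` and whose `add`-closure generates `K^b(P(A))` as a
triangulated category. -/
noncomputable def IsTiltingComplex (X : CochainComplex (ModuleCat.{0} A) ℤ) : Prop :=
  (∀ n, Module.Finite A (X.X n)) ∧ (∀ n, Projective (X.X n)) ∧
  (∃ a b : ℤ, ∀ n : ℤ, (n < a ∨ b < n) → IsZero (X.X n)) ∧
  (∀ (n : ℤ), n ≠ 0 →
    ∀ φ : ((HomotopyCategory.quotient (ModuleCat.{0} A) (ComplexShape.up ℤ)).obj X ⟶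
      (((HomotopyCategory.quotient (ModuleCat.{0} A) (ComplexShape.up ℤ)).obj X)⟦n⟧)), φ = 0) ∧
  (∀ S : Set (HomotopyCategory (ModuleCat.{0} A) (ComplexShape.up ℤ)),
    ((HomotopyCategory.quotient _ _).obj X ∈ S) →
    (∀ Y Z, Y ∈ S → Nonempty (Y ≅ Z) → Z ∈ S) →
    (∀ Y ∈ S, (Y⟦(1 : ℤ)⟧) ∈ S) →
    (∀ Y ∈ S, (Y⟦(-1 : ℤ)⟧) ∈ S) →
    (∀ Y Z, Y ∈ S → Z ∈ S → (Y ⊞ Z) ∈ S) →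
    (∀ Y Z, (Y ⊞ Z) ∈ S → Y ∈ S) →
    (∀ T : Triangle (HomotopyCategory (ModuleCat.{0} A) (ComplexShape.up ℤ)),
      T ∈ distinguishedTriangles → T.obj₁ ∈ S → T.obj₂ ∈ S → T.obj₃ ∈ S) →
    ∀ Y : CochainComplex (ModuleCat.{0} A) ℤ,
      (∀ n, Module.Finite A (Y.X n)) → (∀ n, Projective (Y.X n)) →
      (∃ a b : ℤ, ∀ n : ℤ, (n < a ∨ b < n) → IsZero (Y.X n)) →
      (HomotopyCategory.quotient _ _).obj Y ∈ S)

/-- The endomorphism ring, in the derived category `D^b(A)`, of (the image of)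
a cochain complex of `A`-modules. -/
noncomputable def DbEnd (X : CochainComplex (ModuleCat.{0} A) ℤ) : Type 1 :=
  letI := HasDerivedCategory.standard (ModuleCat.{0} A)
  End (DerivedCategory.Q.obj X)

noncomputable instance (X : CochainComplex (ModuleCat.{0} A) ℤ) : Ring (DbEnd X) :=
  letI := HasDerivedCategory.standard (ModuleCat.{0} A)
  inferInstanceAs (Ring (End (DerivedCategory.Q.obj X)))

end Tilting

/-- The vertex set of the translation quiver `ZAₙ` in the `m`-coordinate
system: the points `[rm, sm+1]` with `r + 1 ≤ s ≤ r + n`. -/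
def ZV (n m : ℕ) : Set (ℤ × ℤ) :=
  {p | ∃ r s : ℤ, p.1 = r * m ∧ p.2 = s * m + 1 ∧ r + 1 ≤ s ∧ s ≤ r + n}

/-- The automorphism `ω` of `ZAₙ` (the inverse suspension), in `m`-coordinates:
`(i,j) ↦ (j - (n+1)m, i+1)`. -/
def ωE (n m : ℕ) : Equiv.Perm (ℤ × ℤ) where
  toFun p := (p.2 - (n + 1) * m, p.1 + 1)
  invFun p := (p.2 - 1, p.1 + (n + 1) * m)
  left_inv p := by simp
  right_inv p := by simp

/-- The AR translate `τ` of `ZAₙ` in `m`-coordinates: `(i,j) ↦ (i-m, j-m)`. -/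
def τE (m : ℕ) : Equiv.Perm (ℤ × ℤ) where
  toFun p := (p.1 - m, p.2 - m)
  invFun p := (p.1 + m, p.2 + m)
  left_inv p := by simp
  right_inv p := by simp

/-- The automorphism `τ_c := τ ∘ ω^(c-1)` of `ZAₙ`. -/
def τcE (n m c : ℕ) : Equiv.Perm (ℤ × ℤ) := τE m * (ωE n m) ^ (c - 1)

/-- The equivalence relation identifying a point of `ZAₙ` with its
`τ_{m+1}`-shifts. -/
def shiftSetoid (n m : ℕ) : Setoid (ℤ × ℤ) where
  r x y := ∃ g : ℤ, (τcE n m (m + 1) ^ g) x = y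
  iseqv := by
    constructor
    · exact fun x => ⟨0, rfl⟩
    · rintro x y ⟨g, rfl⟩
      exact ⟨-g, by simp [← Equiv.Perm.mul_apply, ← zpow_add]⟩
    · rintro x y z ⟨g, rfl⟩ ⟨g', rfl⟩
      exact ⟨g' + g, by simp [← Equiv.Perm.mul_apply, ← zpow_add]⟩

/-- The vertices of the quotient translation quiver `ZAₙ/⟨τ_{m+1}⟩`
(as the quotient of the whole plane `ℤ × ℤ`). -/
def ZQuot (n m : ℕ) : Type := Quotient (shiftSetoid n m)

/-- The canonical projection `π : ZAₙ → ZAₙ/⟨τ_{m+1}⟩`. -/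
def πq (n m : ℕ) : ℤ × ℤ → ZQuot n m := Quotient.mk (shiftSetoid n m)

/-- The forward hammock `H^+(x)`: the set of vertices of `ZAₙ` to which there
is a nonzero morphism from `x` in the mesh category of `ZAₙ`. -/
def Hplus (n m : ℕ) (x : ℤ × ℤ) : Set (ℤ × ℤ) :=
  {y | y ∈ ZV n m ∧ x.1 ≤ y.1 ∧ y.1 ≤ x.2 - (m + 1) ∧ x.2 ≤ y.2 ∧ y.2 ≤ x.1 + (n + 1) * m}

section DivisionAlgebra

/-- A useful consequence of the presentation axioms. -/
theorem MonPres.x_mul_e {k : Type} [Field k] {A : Type*} [Ring A] [Algebra k A]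
    {V : Type} [Fintype V] {R : V → V → Prop} {Z : V → V → V → Prop}
    (P : MonPres k A V R Z) (v w : V) : P.x v w * P.e w = P.x v w := by
  conv_lhs => rw [← P.x_corner v w]
  rw [mul_assoc (P.e v * P.x v w), P.e_idem]
  exact P.x_corner v w

theorem MonPres.e_mul_x {k : Type} [Field k] {A : Type*} [Ring A] [Algebra k A]
    {V : Type} [Fintype V] {R : V → V → Prop} {Z : V → V → V → Prop}
    (P : MonPres k A V R Z) (v w : V) : P.e v * P.x v w = P.x v w := by
  conv_lhs => rw [← P.x_corner v w]
  rw [← mul_assoc, ← mul_assoc, P.e_idem]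
  exact P.x_corner v w

variable {m N : ℕ}

/-- A presentation of an algebra `A` as the algebra `kQ_T/I_T` of a division `T`. -/
abbrev DivPres (k : Type) [Field k] (A : Type*) [Ring A] [Algebra k A]
    (T : Division m N) :=
  MonPres k A (Vtx T) (ArrowV T) (RelV T)

/-- The vertices of a component `S` of the quiver of a division. -/
def CompVtx (S : Finset (Dgl N)) : Type := {d : Dgl N // d ∈ S}

instance (S : Finset (Dgl N)) : Fintype (CompVtx S) := by
  unfold CompVtx; infer_instance

/-- A presentation of an algebra `A` as the component of `kQ_T/I_T`
corresponding to a connected component `S` of the quiver `Q_T`. -/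
abbrev CompPres (k : Type) [Field k] (A : Type*) [Ring A] [Algebra k A]
    (T : Division m N) (S : Finset (Dgl N)) :=
  MonPres k A (CompVtx S) (fun a b => Arrow T a.1 b.1)
    (fun a b c => RelTriple T a.1 b.1 c.1)

/-- The projective module `P_v = A·e_v` of a presented algebra. -/
noncomputable def Pv {k : Type} [Field k] {A : Type} [Ring A] [Algebra k A]
    {V : Type} [Fintype V] {R : V → V → Prop} {Z : V → V → V → Prop}
    (P : MonPres k A V R Z) (v : V) : ModuleCat A :=
  Pmod A (P.e v)

/-- The map `P_v → P_w` induced by the arrow `v → w` of the quiver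
(right multiplication by the arrow element `x v w`). -/
noncomputable def PvMap {k : Type} [Field k] {A : Type} [Ring A] [Algebra k A]
    {V : Type} [Fintype V] {R : V → V → Prop} {Z : V → V → V → Prop}
    (P : MonPres k A V R Z) (v w : V) : Pv P v ⟶ Pv P w :=
  pMap A (P.e v) (P.e w) (P.x v w) (P.x_mul_e v w)

end DivisionAlgebra

section Mesh

/-- The `m`-allowable diagonals of the regular convex `(n+1)m+2`-gon. -/
def ADgl (n m : ℕ) : Type := {d : Dgl ((n + 1) * m + 2) // DglAllow m d}

/-- The `m`-coordinates of an allowable diagonal. -/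
def cz {n m : ℕ} (d : ADgl n m) : ℤ × ℤ :=
  (((d.1.1.1 : ℕ) : ℤ), ((d.1.1.2 : ℕ) : ℤ))

/-- Nonvanishing of `Hom` in the mesh category of `ZAₙ/⟨τ_{m+1}⟩` between the
objects indexed by two allowable diagonals. -/
def MeshHom (n m : ℕ) (d e : ADgl n m) : Prop :=
  ∃ x y : ℤ × ℤ, x ∈ ZV n m ∧ πq n m x = πq n m (cz d) ∧
    πq n m y = πq n m (cz e) ∧ y ∈ Hplus n m x

/-- Nonvanishing of the composition of nonzero morphisms `X_d → X_e → X_f` in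
the mesh category of `ZAₙ/⟨τ_{m+1}⟩`. -/
def MeshComp (n m : ℕ) (d e f : ADgl n m) : Prop :=
  ∃ x y z : ℤ × ℤ, x ∈ ZV n m ∧ πq n m x = πq n m (cz d) ∧
    πq n m y = πq n m (cz e) ∧ πq n m z = πq n m (cz f) ∧
    y ∈ Hplus n m x ∧ z ∈ Hplus n m y ∧ z ∈ Hplus n m x

/-- A model of the `m`-cluster category `C_m = D^b(kAₙ)/τ⁻¹[m]` of type `Aₙ`:
a `k`-linear category whose objects `X d` (the indecomposable objects, indexed
by the `m`-allowable diagonals of the `(n+1)m+2`-gon, equivalently by the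
vertices of `ZAₙ/⟨τ_{m+1}⟩`) have `Hom`-spaces and compositions given by the
mesh category of `ZAₙ/⟨τ_{m+1}⟩`. -/
structure MClusterModel (k : Type) [Field k] (n m : ℕ) (Obj : Type*) [Category Obj]
    [Preadditive Obj] [Linear k Obj] [HasFiniteBiproducts Obj] where
  X : ADgl n m → Obj
  homFin : ∀ d e, FiniteDimensional k (X d ⟶ X e)
  homDim1 : ∀ d e, MeshHom n m d e → Module.finrank k (X d ⟶ X e) = 1
  homDim0 : ∀ d e, ¬ MeshHom n m d e → Module.finrank k (X d ⟶ X e) = 0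
  compIff : ∀ d e f (φ : X d ⟶ X e) (ψ : X e ⟶ X f), φ ≠ 0 → ψ ≠ 0 →
    ((φ ≫ ψ) ≠ 0 ↔ MeshComp n m d e f)

/-- The `k`-algebra structure on the endomorphism ring of an object of a
`k`-linear category. -/
noncomputable def endAlgebra (k : Type) [Field k] {Obj : Type*} [Category Obj]
    [Preadditive Obj] [Linear k Obj] (X : Obj) : Algebra k (End X) :=
  letI : Module k (End X) := inferInstanceAs (Module k (X ⟶ X))
  Algebra.ofModule
    (fun r f g => by
      show g ≫ (r • f) = r • (g ≫ f)
      rw [Linear.comp_smul])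
    (fun r f g => by
      show (r • g) ≫ f = r • (g ≫ f)
      rw [Linear.smul_comp])

end Mesh

section Mutation

variable {m N : ℕ}

/-- Sort a pair of polygon vertices. -/
def sortP {N : ℕ} (p : Fin N × Fin N) : Fin N × Fin N :=
  if (p.1 : ℕ) ≤ (p.2 : ℕ) then p else (p.2, p.1)

/-- Two chords of the polygon cross in the interior. -/
def crossPairs {N : ℕ} (p q : Fin N × Fin N) : Prop :=
  (((sortP p).1 : ℕ) < ((sortP q).1 : ℕ) ∧ ((sortP q).1 : ℕ) < ((sortP p).2 : ℕ) ∧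
      ((sortP p).2 : ℕ) < ((sortP q).2 : ℕ)) ∨
  (((sortP q).1 : ℕ) < ((sortP p).1 : ℕ) ∧ ((sortP p).1 : ℕ) < ((sortP q).2 : ℕ) ∧
      ((sortP q).2 : ℕ) < ((sortP p).2 : ℕ))

/-- `v` is a vertex of (the union of) the two `(m+2)`-gons of the division `T`
having the diagonal `d` as a common edge: `v` sees both endpoints of `d`
without crossing any diagonal of `T`. -/
def SeesBoth (T : Division m N) (d : Dgl N) (v : Fin N) : Prop :=
  ∀ f ∈ T.diags, ¬ crossPairs (v, d.1.1) f.1 ∧ ¬ crossPairs (v, d.1.2) f.1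

/-- `u` is the next vertex after `w`, anticlockwise, among the vertices of the
two cells adjacent to `d`. -/
def NextACW (T : Division m N) (d : Dgl N) (w u : Fin N) : Prop :=
  SeesBoth T d u ∧ u ≠ w ∧ 0 < ang w u ∧
    ∀ u', SeesBoth T d u' → u' ≠ w → 0 < ang w u' → ang w u ≤ ang w u'

/-- `u` is the next vertex after `w`, clockwise, among the vertices of the two
cells adjacent to `d`. -/
def NextCW (T : Division m N) (d : Dgl N) (w u : Fin N) : Prop :=
  SeesBoth T d u ∧ u ≠ w ∧ 0 < ang u w ∧
    ∀ u', SeesBoth T d u' → u' ≠ w → 0 < ang u' w → ang u w ≤ ang u' w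

/-- The diagonal `e` has endpoints `u` and `v`. -/
def sameEnds {N : ℕ} (e : Dgl N) (u v : Fin N) : Prop :=
  (e.1.1 = u ∧ e.1.2 = v) ∨ (e.1.1 = v ∧ e.1.2 = u)

/-- The elementary polygonal move `μ_m`: `e` is obtained from `d₀ ∈ T` by
rotating both endpoints one step anticlockwise inside the two `(m+2)`-gons of
which `d₀` is a common edge. -/
def MuStep (T : Division m N) (d₀ e : Dgl N) : Prop :=
  d₀ ∈ T.diags ∧ ∃ u v, NextACW T d₀ d₀.1.1 u ∧ NextACW T d₀ d₀.1.2 v ∧ sameEnds e u v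

/-- The inverse elementary polygonal move `μ_m⁻¹ = μ_m^m` (clockwise rotation). -/
def MuInvStep (T : Division m N) (d₀ e : Dgl N) : Prop :=
  d₀ ∈ T.diags ∧ ∃ u v, NextCW T d₀ d₀.1.1 u ∧ NextCW T d₀ d₀.1.2 v ∧ sameEnds e u v

/-- `T'` is the division obtained from `T` by replacing the diagonal `d₀`
with the diagonal `e`. -/
def MutatedDiv (T T' : Division m N) (d₀ e : Dgl N) : Prop :=
  T'.diags = insert e (T.diags.erase d₀)

/-- The arrows of the quiver obtained from `Q_T` by the mutation `μ_m` at the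
vertex `mut` (reverse the arrows into `mut`; compose nonzero paths through
`mut` into new arrows, deleting the arrows out of `mut` so used; replace an
arrow `pre → in` whose composite with `in → mut` is a relation by an arrow
`pre → mut`). -/
def MutR (T : Division m N) (mv : Dgl N) : Vtx T → Vtx T → Prop := fun a b =>
  (Arrow T a.1 b.1 ∧ b.1 ≠ mv ∧
    (a.1 = mv → ¬∃ i, Arrow T i mv ∧ ¬ RelTriple T i mv b.1) ∧
    ¬ RelTriple T a.1 b.1 mv)
  ∨ (a.1 = mv ∧ Arrow T b.1 mv)
  ∨ (Arrow T a.1 mv ∧ Arrow T mv b.1 ∧ ¬ RelTriple T a.1 mv b.1)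
  ∨ (b.1 = mv ∧ ∃ i, RelTriple T a.1 i mv)

/-- The relations of the quiver with relations obtained from `(Q_T, I_T)` by
the mutation `μ_m` at `mut`. -/
def MutZ (T : Division m N) (mv : Dgl N) : Vtx T → Vtx T → Vtx T → Prop :=
  fun a b c =>
  (RelTriple T a.1 b.1 c.1 ∧ MutR T mv a b ∧ MutR T mv b c)
  ∨ (b.1 = mv ∧ MutR T mv a b ∧ MutR T mv b c ∧ ¬ RelTriple T a.1 c.1 mv)
  ∨ (a.1 = mv ∧ Arrow T b.1 mv ∧ Arrow T mv c.1 ∧ ¬ RelTriple T b.1 mv c.1)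
  ∨ (Arrow T a.1 mv ∧ Arrow T mv b.1 ∧ ¬ RelTriple T a.1 mv b.1 ∧
      RelTriple T mv b.1 c.1)
  ∨ (c.1 = mv ∧ ∃ i, RelTriple T a.1 b.1 i ∧ RelTriple T b.1 i mv)

/-- The arrows of the quiver obtained from `Q_T` by the inverse mutation
`μ_m⁻¹` at `mut` (reverse the arrows out of `mut`; compose nonzero paths
through `mut`; replace an arrow `out → post` whose composite after `mut → out`
is a relation by an arrow `mut → post`). -/
def MutRD (T : Division m N) (mv : Dgl N) : Vtx T → Vtx T → Prop := fun a b =>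
  (Arrow T a.1 b.1 ∧ a.1 ≠ mv ∧
    (b.1 = mv → ¬∃ o, Arrow T mv o ∧ ¬ RelTriple T a.1 mv o) ∧
    ¬ RelTriple T mv a.1 b.1)
  ∨ (b.1 = mv ∧ Arrow T mv a.1)
  ∨ (Arrow T a.1 mv ∧ Arrow T mv b.1 ∧ ¬ RelTriple T a.1 mv b.1)
  ∨ (a.1 = mv ∧ ∃ o, RelTriple T mv o b.1)

/-- The relations of the quiver with relations obtained from `(Q_T, I_T)` by
the inverse mutation `μ_m⁻¹` at `mut`. -/
def MutZD (T : Division m N) (mv : Dgl N) : Vtx T → Vtx T → Vtx T → Prop :=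
  fun a b c =>
  (RelTriple T a.1 b.1 c.1 ∧ MutRD T mv a b ∧ MutRD T mv b c)
  ∨ (b.1 = mv ∧ MutRD T mv a b ∧ MutRD T mv b c ∧ ¬ RelTriple T mv a.1 c.1)
  ∨ (c.1 = mv ∧ Arrow T a.1 mv ∧ Arrow T mv b.1 ∧ ¬ RelTriple T a.1 mv b.1)
  ∨ (RelTriple T a.1 b.1 mv ∧ Arrow T b.1 mv ∧ Arrow T mv c.1 ∧
      ¬ RelTriple T b.1 mv c.1)
  ∨ (a.1 = mv ∧ ∃ o, RelTriple T mv o b.1 ∧ RelTriple T o b.1 c.1)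

end Mutation

section NormalForm

/-- Membership of a natural number in the `t`-th cycle of the normal form. -/
def NFInCyc (mm t v : ℕ) : Prop := t * (mm + 1) ≤ v ∧ v ≤ (t + 1) * (mm + 1)

/-- The cyclic successor inside the `t`-th cycle of the normal form. -/
def NFSucc (mm t a b : ℕ) : Prop :=
  (t * (mm + 1) ≤ a ∧ a < (t + 1) * (mm + 1) ∧ b = a + 1) ∨
    (a = (t + 1) * (mm + 1) ∧ b = t * (mm + 1))

/-- The arrows of the normal form quiver on `s` vertices with `r` oriented
`(mm+2)`-cycles: a chain of `r` cycles, consecutive cycles sharing a vertex,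
followed by a linearly oriented path. -/
def NFR (mm r s : ℕ) : Fin s → Fin s → Prop := fun a b =>
  ((a : ℕ) + 1 = (b : ℕ)) ∨
    (∃ t, t < r ∧ (a : ℕ) = (t + 1) * (mm + 1) ∧ (b : ℕ) = t * (mm + 1))

/-- The relations of the normal form: the cycles have full relations, and
there are no other relations. -/
def NFZ (mm r s : ℕ) : Fin s → Fin s → Fin s → Prop := fun a b c =>
  ∃ t, t < r ∧ NFSucc mm t a b ∧ NFSucc mm t b c

/-- The linear (equi)orientation of the Dynkin quiver `A_s`. -/
def LinR (s : ℕ) : Fin s → Fin s → Prop := fun a b => (a : ℕ) + 1 = (b : ℕ)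

end NormalForm

section AbstractQuiver

variable {V : Type*}

/-- An oriented cycle in an abstract quiver with arrow relation `R`. -/
def IsCycleR (R : V → V → Prop) (l : List V) : Prop :=
  l ≠ [] ∧ l.Nodup ∧ List.Chain' R (l ++ l.take 1)

/-- All consecutive length-two subpaths of the walk `l` are relations of `Z`. -/
def AllZ (Z : V → V → V → Prop) (l : List V) : Prop :=
  ∀ (kk : ℕ) (a b c : V) (r : List V), l.drop kk = a :: b :: c :: r → Z a b c

end AbstractQuiver

/-! Gluing an `a`-gon and a `b`-gon along a common edge gives an `(a + b - 2)`-gon, so every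
polygon divided into `(m+2)`-gons has `N ≡ 2 (mod m)` vertices. Conversely, gluing `k + 1`
copies of the `(m+2)`-gon in a row produces an `(m (k + 1) + 2)`-gon. -/

namespace GonDiv

theorem modEq_two {m N : ℕ} (h : GonDiv m N) : N ≡ 2 [MOD m] := by
  induction h with
  | base => exact Nat.add_modEq_left
  | @split a b ha _ _ _ iha ihb =>
    have hglue : a + b - 2 + 2 ≡ 2 + 2 [MOD m] := by
      rw [Nat.sub_add_cancel (by omega)]
      exact iha.add ihb
    exact hglue.add_right_cancel' 2

theorem mul_succ_add_two {m : ℕ} (hm : 0 < m) : ∀ k : ℕ, GonDiv m (m * (k + 1) + 2)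
  | 0 => by simpa using base
  | k + 1 => by
    have hpos : 0 < m * (k + 1) := Nat.mul_pos hm k.succ_pos
    have hglue := split (by omega) (by omega) base (mul_succ_add_two hm k)
    convert hglue using 1
    rw [mul_add_one]
    omega

theorem of_modEq_two {m N : ℕ} (hN : 3 ≤ N) (h : N ≡ 2 [MOD m]) : GonDiv m N := by
  obtain ⟨q, hq⟩ := (Nat.modEq_iff_dvd' (by omega)).mp h.symm
  obtain ⟨k, rfl⟩ : ∃ k, q = k + 1 :=
    Nat.exists_eq_add_one.mpr (Nat.pos_of_ne_zero (by rintro rfl; simp at hq; omega))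
  have hm : 0 < m := Nat.pos_of_ne_zero (by rintro rfl; omega)
  obtain rfl : N = m * (k + 1) + 2 := by omega
  exact mul_succ_add_two hm k

end GonDiv

theorem polygon_division_iff_mod_general (m N : ℕ) (hN : 3 ≤ N) :
    GonDiv m N ↔ N % m = 2 % m :=
  ⟨GonDiv.modEq_two, GonDiv.of_modEq_two hN⟩

/-- **Lemma (div).** A regular convex `N`-gon can be divided into convex
`(m+2)`-gons by pairwise non-crossing diagonals if and only if `N ≡ 2 (mod m)`. -/
theorem polygon_division_iff_mod (m N : ℕ) (hm : 1 ≤ m) (hN : 3 ≤ N) :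
    GonDiv m N ↔ N % m = 2 % m :=
  polygon_division_iff_mod_general m N hN

end MCT
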